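/- arXiv:2401.01324 — 3 statements merged into one kernel-verified Lean document; each statement's English description precedes it below -/
import Mathlib

section
/- For any B-decision table T with |B| = k ≥ 2 and cl(T) ≥ 2, the number of rows satisfies N(T) ≤ (k² · dim T)^{I(T)}, where I(T) is the maximum dimension of a quasicomplete table in [T]. -/
open scoped Classical

/-- A `B`-decision table: `dim` columns, rows are pairwise distinct tuples
from `B^dim` (a `Finset`), each row labeled by a decision `dec r : ℕ`. -/
structure Table (B : Type) [Fintype B] [DecidableEq B] where
  dim : ℕ
  rows : Finset (Fin dim → B)
  dec : (Fin dim → B) → ℕ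

variable {B : Type} [Fintype B] [DecidableEq B]

/-- number of rows N(T) -/
def Table.N (T : Table B) : ℕ := T.rows.card

/-- number of decision classes cl(T) -/
def Table.cl (T : Table B) : ℕ := (T.rows.image T.dec).card

/-- `T' ∈ [T]`: `T'` is obtained from `T` by removing columns (keeping an
order-preserving selection `φ` of columns), merging equal rows, and changing
decisions arbitrarily. -/
def SubTable (T T' : Table B) : Prop :=
  ∃ φ : Fin T'.dim → Fin T.dim, StrictMono φ ∧
    T'.rows = T.rows.image (fun r => r ∘ φ)

/-- closed class: C = ⋃_{T ∈ C} [T] -/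
def IsClosedClass (C : Set (Table B)) : Prop :=
  ∀ T ∈ C, ∀ T', SubTable T T' → T' ∈ C

/-- nondegenerate: number of rows of tables in C is unbounded -/
def Nondegenerate (C : Set (Table B)) : Prop :=
  ∀ m : ℕ, ∃ T ∈ C, m ≤ T.N

/-- a test: a set of columns separating any two rows with different decisions -/
def IsTest (T : Table B) (S : Finset (Fin T.dim)) : Prop :=
  ∀ r ∈ T.rows, ∀ r' ∈ T.rows, T.dec r ≠ T.dec r' → ∃ i ∈ S, r i ≠ r' i

/-- a reduct: a test no proper subset of which is a test -/
def IsReduct (T : Table B) (S : Finset (Fin T.dim)) : Prop :=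
  IsTest T S ∧ ∀ S' ⊂ S, ¬ IsTest T S'

/-- R(T): minimum cardinality of a reduct for T -/
noncomputable def R (T : Table B) : ℕ :=
  sInf {m | ∃ S : Finset (Fin T.dim), IsReduct T S ∧ S.card = m}

/-- quasicomplete: rows contain a product of two-element subsets of B -/
def Quasicomplete (T : Table B) : Prop :=
  ∃ Bs : Fin T.dim → Finset B, (∀ i, (Bs i).card = 2) ∧
    ∀ r : Fin T.dim → B, (∀ i, r i ∈ Bs i) → r ∈ T.rows

/-- I(T): maximum dimension of a quasicomplete table in [T] -/
noncomputable def Ival (T : Table B) : ℕ :=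
  sSup {d | ∃ T', SubTable T T' ∧ Quasicomplete T' ∧ T'.dim = d}

/-- N_C(n) = max { N(T) : T ∈ C, dim T ≤ n } -/
noncomputable def NC (C : Set (Table B)) (n : ℕ) : ℕ :=
  sSup {m | ∃ T ∈ C, T.dim ≤ n ∧ T.N = m}

/-!
Induction on the number of columns, in the style of the Sauer–Shelah lemma. Let `F` be a set
of rows with `n + 1` columns shattering no `d + 1` columns, `F'` its projection forgetting the
last column, and `F_ab` (for `a ≠ b`) the set of prefixes that extend to rows of `F` both by `a`
and by `b`. A prefix with `m ≥ 1` extensions lies in `m (m - 1) ≥ m - 1` of the `F_ab`, so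
`|F| ≤ |F'| + ∑ |F_ab|`. Now `F'` shatters no `d + 1` columns, and `F_ab` shatters no `d`
columns, since adding the last column with the pair `{a, b}` would make `F` shatter `d + 1`.
As there are at most `k²` pairs, induction gives
`|F| ≤ (k²n)^d + k² (k²n)^(d-1) = (k²n)^(d-1) k² (n + 1) ≤ (k²(n + 1))^d`.
-/

omit [Fintype B] in
/-- `Shatters T.rows d` says that `[T]` contains a quasicomplete table of dimension `d`. -/
def Shatters {n : ℕ} (F : Finset (Fin n → B)) (d : ℕ) : Prop :=
  ∃ φ : Fin d → Fin n, StrictMono φ ∧ ∃ Bs : Fin d → Finset B, (∀ i, (Bs i).card = 2) ∧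
    ∀ r : Fin d → B, (∀ i, r i ∈ Bs i) → r ∈ F.image (· ∘ φ)

lemma le_Ival_of_shatters {T : Table B} {d : ℕ} (h : Shatters T.rows d) : d ≤ Ival T := by
  obtain ⟨φ, hφ, Bs, hBs, hcov⟩ := h
  have hbdd : BddAbove {d | ∃ T', SubTable T T' ∧ Quasicomplete T' ∧ T'.dim = d} := by
    refine ⟨T.dim, fun d ⟨T', ⟨ψ, hψ, _⟩, _, hd⟩ => ?_⟩
    simpa [hd] using Fintype.card_le_of_injective ψ hψ.injective
  exact le_csSup hbdd ⟨⟨d, T.rows.image (· ∘ φ), fun _ => 0⟩, ⟨φ, hφ, rfl⟩, ⟨Bs, hBs, hcov⟩, rfl⟩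

omit [Fintype B] in
lemma card_le_one_of_not_shatters_one {n : ℕ} {F : Finset (Fin n → B)}
    (h : ¬ Shatters F 1) : F.card ≤ 1 := by
  refine Finset.card_le_one.mpr fun r hr r' hr' => funext fun i => ?_
  by_contra hne
  refine h ⟨fun _ => i, Subsingleton.strictMono _, fun _ => {r i, r' i},
    fun _ => Finset.card_pair hne, fun x hx => ?_⟩
  obtain h0 | h0 : x 0 = r i ∨ x 0 = r' i := by simpa using hx 0
  · exact Finset.mem_image.mpr ⟨r, hr, funext fun j => by rw [Subsingleton.elim j 0, h0]; rfl⟩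
  · exact Finset.mem_image.mpr ⟨r', hr', funext fun j => by rw [Subsingleton.elim j 0, h0]; rfl⟩

omit [Fintype B] in
theorem Shatters.of_image_init {n d : ℕ} {F : Finset (Fin (n + 1) → B)}
    (h : Shatters (F.image Fin.init) d) : Shatters F d := by
  obtain ⟨φ, hφ, Bs, hBs, hcov⟩ := h
  refine ⟨Fin.castSucc ∘ φ, Fin.strictMono_castSucc.comp hφ, Bs, hBs, fun r hr => ?_⟩
  have hr' := hcov r hr
  rw [Finset.image_image] at hr'
  exact hr'

lemma strictMono_snoc_castSucc_comp {n d : ℕ} {φ : Fin d → Fin n} (hφ : StrictMono φ) :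
    StrictMono (Fin.snoc (Fin.castSucc ∘ φ) (Fin.last n) : Fin (d + 1) → Fin (n + 1)) := by
  intro i j hij
  induction j using Fin.lastCases with
  | last =>
    induction i using Fin.lastCases with
    | last => exact absurd hij (lt_irrefl _)
    | cast i => simp [Fin.castSucc_lt_last]
  | cast j =>
    induction i using Fin.lastCases with
    | last => exact absurd hij (not_lt.2 (Fin.le_last _))
    | cast i => simpa using hφ (by simpa using hij)

section LastColumn

variable {n : ℕ} (F : Finset (Fin (n + 1) → B))

def lastValues (g : Fin n → B) : Finset B :=
  Finset.univ.filter fun c => Fin.snoc g c ∈ F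

omit [Fintype B] in
def initsWithBoth (a b : B) : Finset (Fin n → B) :=
  (F.image Fin.init).filter fun g => Fin.snoc g a ∈ F ∧ Fin.snoc g b ∈ F

omit [Fintype B] in
theorem Shatters.of_initsWithBoth {d : ℕ} {a b : B} (hab : a ≠ b)
    (h : Shatters (initsWithBoth F a b) d) : Shatters F (d + 1) := by
  obtain ⟨φ, hφ, Bs, hBs, hcov⟩ := h
  refine ⟨Fin.snoc (Fin.castSucc ∘ φ) (Fin.last n), strictMono_snoc_castSucc_comp hφ,
    Fin.snoc Bs {a, b}, fun i => ?_, fun r hr => ?_⟩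
  · induction i using Fin.lastCases <;> simp [Finset.card_pair hab, hBs]
  obtain ⟨g, hg, hgr⟩ :=
    Finset.mem_image.mp (hcov (Fin.init r) fun i => by simpa [Fin.init] using hr i.castSucc)
  have hgF : ∀ c ∈ ({a, b} : Finset B), Fin.snoc g c ∈ F := by
    simpa using (Finset.mem_filter.mp hg).2
  refine Finset.mem_image.mpr
    ⟨Fin.snoc g (r (Fin.last d)), hgF _ (by simpa using hr (Fin.last d)), funext fun i => ?_⟩
  induction i using Fin.lastCases with
  | last => simp
  | cast i => simpa [Fin.init] using congrFun hgr i

lemma lastValues_nonempty {g : Fin n → B} (hg : g ∈ F.image Fin.init) :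
    (lastValues F g).Nonempty := by
  obtain ⟨r, hr, rfl⟩ := Finset.mem_image.mp hg
  exact ⟨r (Fin.last n), by simpa [lastValues, Fin.snoc_init_self] using hr⟩

lemma card_eq_sum_card_lastValues :
    F.card = ∑ g ∈ F.image Fin.init, (lastValues F g).card := by
  rw [Finset.card_eq_sum_card_image Fin.init F]
  refine Finset.sum_congr rfl fun g _ =>
    Finset.card_nbij' (· (Fin.last n)) (fun c => Fin.snoc g c) ?_ ?_ ?_ ?_
  all_goals intro x hx; simp only [lastValues, Finset.coe_filter, Set.mem_ofPred_eq,
    Finset.mem_univ, true_and] at hx ⊢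
  · rw [← hx.2, Fin.snoc_init_self]; exact hx.1
  · simpa using hx
  · rw [← hx.2, Fin.snoc_init_self]
  · simp

lemma sum_card_offDiag_lastValues :
    ∑ g ∈ F.image Fin.init, (lastValues F g).offDiag.card =
      ∑ p ∈ (Finset.univ : Finset B).offDiag, (initsWithBoth F p.1 p.2).card := by
  have hoffDiag : ∀ g : Fin n → B, (lastValues F g).offDiag =
      Finset.univ.offDiag.filter fun p => Fin.snoc g p.1 ∈ F ∧ Fin.snoc g p.2 ∈ F := by
    intro g
    ext p
    simp [lastValues]
    tauto
  simp_rw [hoffDiag]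
  exact Finset.sum_card_bipartiteAbove_eq_sum_card_bipartiteBelow _

lemma Finset.card_le_one_add_card_offDiag {α : Type*} [DecidableEq α] {s : Finset α}
    (hs : s.Nonempty) : s.card ≤ 1 + s.offDiag.card := by
  obtain ⟨m, hm⟩ := Nat.exists_eq_add_one_of_ne_zero hs.card_pos.ne'
  have h1 : m ≤ (m + 1) * m := Nat.le_mul_of_pos_left m m.succ_pos
  have h2 : (m + 1) * (m + 1) = (m + 1) * m + (m + 1) := by ring
  rw [Finset.offDiag_card, hm]
  omega

lemma card_le_card_image_init_add_sum_card_initsWithBoth :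
    F.card ≤ (F.image Fin.init).card +
      ∑ p ∈ (Finset.univ : Finset B).offDiag, (initsWithBoth F p.1 p.2).card :=
  calc F.card = ∑ g ∈ F.image Fin.init, (lastValues F g).card := card_eq_sum_card_lastValues F
    _ ≤ ∑ g ∈ F.image Fin.init, (1 + (lastValues F g).offDiag.card) :=
        Finset.sum_le_sum fun g hg =>
          Finset.card_le_one_add_card_offDiag (lastValues_nonempty F hg)
    _ = _ := by
        rw [Finset.sum_add_distrib, sum_card_offDiag_lastValues, Finset.card_eq_sum_ones]

end LastColumn

theorem card_le_of_not_shatters {n d : ℕ} (hn : 1 ≤ n) {F : Finset (Fin n → B)}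
    (hF : ¬ Shatters F (d + 1)) : F.card ≤ (Fintype.card B ^ 2 * n) ^ d := by
  induction n, hn using Nat.le_induction generalizing d with
  | base =>
    rcases d with _ | e
    · simpa using card_le_one_of_not_shatters_one hF
    · set k := Fintype.card B
      calc F.card ≤ k := by simpa [k] using F.card_le_univ
        _ ≤ k ^ 2 := Nat.le_self_pow two_ne_zero k
        _ ≤ (k ^ 2 * 1) ^ (e + 1) := by rw [mul_one]; exact Nat.le_self_pow e.succ_ne_zero _
  | succ n hn ih =>
    rcases d with _ | e
    · simpa using card_le_one_of_not_shatters_one hF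
    · set K := Fintype.card B ^ 2
      have hinit : (F.image Fin.init).card ≤ (K * n) ^ (e + 1) :=
        ih fun h => hF h.of_image_init
      have hboth : ∀ p ∈ (Finset.univ : Finset B).offDiag,
          (initsWithBoth F p.1 p.2).card ≤ (K * n) ^ e :=
        fun p hp => ih fun h => hF (h.of_initsWithBoth F (Finset.mem_offDiag.mp hp).2.2)
      have hpairs : (Finset.univ : Finset B).offDiag.card ≤ K := by
        rw [Finset.offDiag_card, Finset.card_univ]
        exact (Nat.sub_le _ _).trans_eq (sq _).symm
      calc F.card ≤ (K * n) ^ (e + 1) + ∑ _p ∈ (Finset.univ : Finset B).offDiag, (K * n) ^ e :=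
            (card_le_card_image_init_add_sum_card_initsWithBoth F).trans
              (add_le_add hinit (Finset.sum_le_sum hboth))
        _ ≤ (K * n) ^ (e + 1) + K * (K * n) ^ e := by
            rw [Finset.sum_const, smul_eq_mul]; gcongr
        _ = (K * n) ^ e * (K * (n + 1)) := by ring
        _ ≤ (K * (n + 1)) ^ e * (K * (n + 1)) := by gcongr; omega
        _ = (K * (n + 1)) ^ (e + 1) := (pow_succ _ _).symm

theorem stmt_6_general (T : Table B) (k : ℕ) (hk : Fintype.card B = k)
    (hcl : 2 ≤ T.cl) : T.N ≤ (k ^ 2 * T.dim) ^ Ival T := by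
  subst hk
  have hN : 1 < T.rows.card := hcl.trans Finset.card_image_le
  have hdim : 1 ≤ T.dim := by
    by_contra! h
    have : T.rows.card ≤ 1 := by
      simpa [Nat.lt_one_iff.mp h] using T.rows.card_le_univ
    omega
  exact card_le_of_not_shatters hdim fun h => (le_Ival_of_shatters h).not_gt (Nat.lt_succ_self _)

theorem stmt_6 (T : Table B) (k : ℕ) (hk : Fintype.card B = k) (hk2 : 2 ≤ k)
    (hcl : 2 ≤ T.cl) : T.N ≤ (k ^ 2 * T.dim) ^ Ival T :=
  stmt_6_general T k hk hcl
end

section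
/- Let C be a nondegenerate closed class of B-decision tables (|B| = k ≥ 2) with I(C) < +∞. Then for every natural number n, N_C(n) ≤ (k² n)^{I(C)}, where N_C(n) = max{N(T) : T ∈ C, dim T ≤ n}. -/
open scoped Classical

variable {B : Type} [Fintype B] [DecidableEq B]

set_option linter.unusedSectionVars false

namespace Stmt7Aux

def HasCube {n : ℕ} (d : ℕ) (F : Finset (Fin n → B)) : Prop :=
  ∃ φ : Fin d → Fin n, StrictMono φ ∧ ∃ Bs : Fin d → Finset B,
    (∀ i, (Bs i).card = 2) ∧ ∀ r : Fin d → B, (∀ i, r i ∈ Bs i) → ∃ s ∈ F, r = s ∘ φ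

lemma card_le_one_of_cube {n : ℕ} (F : Finset (Fin n → B))
    (h : ∀ d, HasCube d F → d ≤ 0) : F.card ≤ 1 := by
  rw [Finset.card_le_one]
  intro a ha b hb
  by_contra hne
  obtain ⟨i, hi⟩ : ∃ i, a i ≠ b i := by
    by_contra hc; push_neg at hc; exact hne (funext hc)
  have : HasCube 1 F := by
    refine ⟨fun _ => i, Subsingleton.strictMono _, fun _ => {a i, b i}, ?_, ?_⟩
    · intro _; exact Finset.card_pair hi
    · intro r hr
      have := hr 0
      simp only [Finset.mem_insert, Finset.mem_singleton] at this
      rcases this with h0 | h0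
      · exact ⟨a, ha, funext fun j => by rw [Subsingleton.elim j 0]; exact h0⟩
      · exact ⟨b, hb, funext fun j => by rw [Subsingleton.elim j 0]; exact h0⟩
  exact absurd (h 1 this) (by omega)

lemma count_split {n : ℕ} (F : Finset (Fin (n+1) → B)) :
    F.card ≤ (F.image (fun r => r ∘ Fin.castSucc)).card +
      ∑ p ∈ (Finset.univ : Finset B).offDiag,
        (((F.filter (fun r => r (Fin.last n) = p.1)).image (fun r => r ∘ Fin.castSucc)) ∩
         ((F.filter (fun r => r (Fin.last n) = p.2)).image (fun r => r ∘ Fin.castSucc))).card := by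
  classical
  set proj : (Fin (n+1) → B) → (Fin n → B) := fun r => r ∘ Fin.castSucc with hproj
  set Fb : B → Finset (Fin n → B) :=
    fun b => (F.filter (fun r => r (Fin.last n) = b)).image proj with hFb
  set U : Finset (Fin n → B) := F.image proj with hU
  have hsub : ∀ b, Fb b ⊆ U := fun b =>
    Finset.image_subset_image (Finset.filter_subset _ _)
  set m : (Fin n → B) → ℕ := fun x => (Finset.univ.filter (fun b => x ∈ Fb b)).card with hm
  have hinj : ∀ b : B, Set.InjOn proj (F.filter (fun r => r (Fin.last n) = b)) := by
    intro b r hr s hs hrs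
    simp only [Finset.coe_filter, Set.mem_setOf_eq] at hr hs
    funext i
    induction i using Fin.lastCases with
    | last => rw [hr.2, hs.2]
    | cast j => exact congrFun hrs j
  have h1 : F.card = ∑ b : B, (Fb b).card := by
    rw [Finset.card_eq_sum_card_fiberwise
      (f := fun r => r (Fin.last n)) (fun r _ => Finset.mem_univ (r (Fin.last n)))]
    exact Finset.sum_congr rfl fun b _ => (Finset.card_image_of_injOn (hinj b)).symm
  have h2 : ∑ b : B, (Fb b).card = ∑ x ∈ U, m x := by
    have hb : ∀ b : B, (Fb b).card = ∑ x ∈ U, if x ∈ Fb b then 1 else 0 := by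
      intro b
      rw [← Finset.card_filter]
      congr 1
      rw [Finset.filter_mem_eq_inter, Finset.inter_eq_right.mpr (hsub b)]
    simp only [hb]
    rw [Finset.sum_comm]
    refine Finset.sum_congr rfl fun x _ => ?_
    simp only [hm, Finset.card_filter]
  have h3 : ∑ x ∈ U, (m x * m x - m x) ≤
      ∑ p ∈ (Finset.univ : Finset B).offDiag, (Fb p.1 ∩ Fb p.2).card := by
    have hins : ∀ p : B × B, (Fb p.1 ∩ Fb p.2).card =
        ∑ x ∈ U, if x ∈ Fb p.1 ∧ x ∈ Fb p.2 then 1 else 0 := by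
      intro p
      rw [← Finset.card_filter]
      congr 1
      ext x
      simp only [Finset.mem_filter, Finset.mem_inter]
      exact ⟨fun ⟨h1x, h2x⟩ => ⟨hsub _ h1x, h1x, h2x⟩, fun ⟨_, hx⟩ => hx⟩
    simp only [hins]
    rw [Finset.sum_comm]
    refine Finset.sum_le_sum fun x _ => ?_
    have hset : (Finset.univ.filter (fun b => x ∈ Fb b)).offDiag =
        (Finset.univ : Finset B).offDiag.filter (fun p => x ∈ Fb p.1 ∧ x ∈ Fb p.2) := by
      ext p
      simp only [Finset.mem_offDiag, Finset.mem_filter, Finset.mem_univ, true_and]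
      tauto
    have : (m x) * (m x) - m x = ((Finset.univ.filter (fun b => x ∈ Fb b)).offDiag).card := by
      rw [Finset.offDiag_card]
    rw [this, hset, Finset.card_filter]
  have hmem : ∀ x ∈ U, 1 ≤ m x := by
    intro x hx
    rw [hU, Finset.mem_image] at hx
    obtain ⟨t, ht, rfl⟩ := hx
    have : t (Fin.last n) ∈ Finset.univ.filter (fun b => proj t ∈ Fb b) :=
      Finset.mem_filter.mpr ⟨Finset.mem_univ _,
        Finset.mem_image.mpr ⟨t, Finset.mem_filter.mpr ⟨ht, rfl⟩, rfl⟩⟩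
    exact Finset.card_pos.mpr ⟨_, this⟩
  calc F.card = ∑ x ∈ U, m x := by rw [h1, h2]
    _ ≤ ∑ x ∈ U, (1 + (m x * m x - m x)) := by
        refine Finset.sum_le_sum fun x hx => ?_
        have h1x := hmem x hx
        have h2x : m x ≤ m x * m x := Nat.le_mul_of_pos_left _ h1x
        have h3x : m x + m x ≤ 1 + m x * m x := by
          rcases Nat.exists_eq_add_of_le h1x with ⟨t, ht⟩
          rw [ht]; nlinarith
        omega
    _ = U.card + ∑ x ∈ U, (m x * m x - m x) := by
        rw [Finset.sum_add_distrib, Finset.sum_const, Nat.smul_one_eq_cast]; simp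
    _ ≤ U.card + ∑ p ∈ (Finset.univ : Finset B).offDiag, (Fb p.1 ∩ Fb p.2).card :=
        Nat.add_le_add_left h3 _

lemma snoc_strictMono {d n : ℕ} {φ : Fin d → Fin n} (hφ : StrictMono φ) :
    StrictMono (Fin.snoc (fun i => (φ i).castSucc) (Fin.last n) : Fin (d+1) → Fin (n+1)) := by
  intro i j hij
  induction j using Fin.lastCases with
  | last =>
    have hi : i ≠ Fin.last d := Fin.ne_last_of_lt hij
    obtain ⟨i0, rfl⟩ := Fin.exists_castSucc_eq.mpr hi
    simp only [Fin.snoc_castSucc, Fin.snoc_last]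
    exact Fin.castSucc_lt_last _
  | cast j0 =>
    have hi : i ≠ Fin.last d := Fin.ne_last_of_lt (lt_trans hij (Fin.castSucc_lt_last _))
    obtain ⟨i0, rfl⟩ := Fin.exists_castSucc_eq.mpr hi
    simp only [Fin.snoc_castSucc]
    exact Fin.castSucc_lt_castSucc_iff.mpr (hφ (Fin.castSucc_lt_castSucc_iff.mp hij))

lemma cube_proj {n d : ℕ} (F : Finset (Fin (n+1) → B))
    (h : HasCube d (F.image (fun r => r ∘ Fin.castSucc))) : HasCube d F := by
  obtain ⟨φ, hφ, Bs, hBs, hcube⟩ := h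
  refine ⟨fun i => (φ i).castSucc, fun i j hij => Fin.castSucc_lt_castSucc_iff.mpr (hφ hij),
    Bs, hBs, fun r hr => ?_⟩
  obtain ⟨u, hu, rfl⟩ := hcube r hr
  obtain ⟨t, ht, rfl⟩ := Finset.mem_image.mp hu
  exact ⟨t, ht, rfl⟩

lemma cube_inter {n d : ℕ} (F : Finset (Fin (n+1) → B)) (a b : B) (hab : a ≠ b)
    (h : HasCube d (((F.filter (fun r => r (Fin.last n) = a)).image (fun r => r ∘ Fin.castSucc)) ∩
         ((F.filter (fun r => r (Fin.last n) = b)).image (fun r => r ∘ Fin.castSucc)))) :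
    HasCube (d+1) F := by
  obtain ⟨φ, hφ, Bs, hBs, hcube⟩ := h
  refine ⟨Fin.snoc (fun i => (φ i).castSucc) (Fin.last n), snoc_strictMono hφ,
    Fin.snoc Bs ({a, b} : Finset B), ?_, ?_⟩
  · intro i
    induction i using Fin.lastCases with
    | last => simp only [Fin.snoc_last]; exact Finset.card_pair hab
    | cast i0 => simp only [Fin.snoc_castSucc]; exact hBs i0
  · intro r hr
    have hr0 : ∀ i : Fin d, r i.castSucc ∈ Bs i := by
      intro i; have := hr i.castSucc; rwa [Fin.snoc_castSucc] at this
    obtain ⟨u, hu, hru⟩ := hcube (fun i => r i.castSucc) hr0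
    have hc : r (Fin.last d) ∈ ({a, b} : Finset B) := by
      have := hr (Fin.last d); rwa [Fin.snoc_last] at this
    rw [Finset.mem_inter] at hu
    -- pick the copy of u in F with last coordinate r (last d)
    have key : ∀ c : B, r (Fin.last d) = c →
        u ∈ (F.filter (fun r => r (Fin.last n) = c)).image (fun r => r ∘ Fin.castSucc) →
        ∃ s ∈ F, r = s ∘ Fin.snoc (fun i => (φ i).castSucc) (Fin.last n) := by
      intro c hc hmem
      obtain ⟨t, ht, rfl⟩ := Finset.mem_image.mp hmem
      rw [Finset.mem_filter] at ht
      refine ⟨t, ht.1, funext fun i => ?_⟩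
      induction i using Fin.lastCases with
      | last => simp only [Function.comp_apply, Fin.snoc_last]; rw [hc, ht.2]
      | cast i0 =>
        simp only [Function.comp_apply, Fin.snoc_castSucc]
        exact congrFun hru i0
    simp only [Finset.mem_insert, Finset.mem_singleton] at hc
    rcases hc with hc | hc
    · exact key a hc hu.1
    · exact key b hc hu.2

lemma key_lemma (k : ℕ) (hk : Fintype.card B = k) (hk2 : 2 ≤ k) :
    ∀ n, 1 ≤ n → ∀ q (F : Finset (Fin n → B)),
      (∀ d, HasCube d F → d ≤ q) → F.card ≤ (k ^ 2 * n) ^ q := by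
  intro n
  induction n with
  | zero => omega
  | succ n ih =>
    intro _ q F hF
    match q with
    | 0 => simpa using card_le_one_of_cube F hF
    | (q' + 1) =>
      rcases Nat.eq_zero_or_pos n with rfl | hn
      · -- base case n + 1 = 1
        have h1 : F.card ≤ k := by
          calc F.card ≤ Fintype.card (Fin 1 → B) := Finset.card_le_univ F
            _ = k := by simp [hk]
        calc F.card ≤ k := h1
          _ ≤ k ^ 2 * 1 := by nlinarith
          _ ≤ (k ^ 2 * 1) ^ (q' + 1) := Nat.le_self_pow (by omega) _
      · -- inductive step
        have hU : (F.image (fun r => r ∘ Fin.castSucc)).card ≤ (k ^ 2 * n) ^ (q' + 1) :=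
          ih hn (q' + 1) _ (fun d hd => hF d (cube_proj F hd))
        have hpair : ∀ p ∈ (Finset.univ : Finset B).offDiag,
            (((F.filter (fun r => r (Fin.last n) = p.1)).image (fun r => r ∘ Fin.castSucc)) ∩
             ((F.filter (fun r => r (Fin.last n) = p.2)).image (fun r => r ∘ Fin.castSucc))).card
              ≤ (k ^ 2 * n) ^ q' := by
          intro p hp
          rw [Finset.mem_offDiag] at hp
          refine ih hn q' _ (fun d hd => ?_)
          have := hF (d + 1) (cube_inter F p.1 p.2 hp.2.2 hd)
          omega
        have hsum : ∑ p ∈ (Finset.univ : Finset B).offDiag,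
            (((F.filter (fun r => r (Fin.last n) = p.1)).image (fun r => r ∘ Fin.castSucc)) ∩
             ((F.filter (fun r => r (Fin.last n) = p.2)).image (fun r => r ∘ Fin.castSucc))).card
              ≤ k ^ 2 * (k ^ 2 * n) ^ q' := by
          calc _ ≤ ∑ _p ∈ (Finset.univ : Finset B).offDiag, (k ^ 2 * n) ^ q' :=
                Finset.sum_le_sum hpair
            _ = (Finset.univ : Finset B).offDiag.card * (k ^ 2 * n) ^ q' := by
                rw [Finset.sum_const, smul_eq_mul]
            _ ≤ k ^ 2 * (k ^ 2 * n) ^ q' := by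
                have : (Finset.univ : Finset B).offDiag.card ≤ k ^ 2 := by
                  rw [Finset.offDiag_card]
                  simp only [Finset.card_univ, hk]
                  calc k * k - k ≤ k * k := Nat.sub_le _ _
                    _ = k ^ 2 := (sq k).symm
                exact Nat.mul_le_mul_right _ this
        calc F.card ≤ (F.image (fun r => r ∘ Fin.castSucc)).card + _ := count_split F
          _ ≤ (k ^ 2 * n) ^ (q' + 1) + k ^ 2 * (k ^ 2 * n) ^ q' := Nat.add_le_add hU hsum
          _ = (k ^ 2 * n + k ^ 2) * (k ^ 2 * n) ^ q' := by ring
          _ = (k ^ 2 * (n + 1)) * (k ^ 2 * n) ^ q' := by ring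
          _ ≤ (k ^ 2 * (n + 1)) * (k ^ 2 * (n + 1)) ^ q' := by
              have hle : (k ^ 2 * n) ^ q' ≤ (k ^ 2 * (n + 1)) ^ q' :=
                Nat.pow_le_pow_left (Nat.mul_le_mul_left _ (Nat.le_succ n)) _
              exact Nat.mul_le_mul_left _ hle
          _ = (k ^ 2 * (n + 1)) ^ (q' + 1) := by rw [pow_succ]; ring

end Stmt7Aux

open Stmt7Aux in
theorem stmt_7 (C : Set (Table B)) (hC : IsClosedClass C) (hnd : Nondegenerate C)
    (k : ℕ) (hk : Fintype.card B = k) (hk2 : 2 ≤ k)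
    (q : ℕ) (hub : ∀ T ∈ C, Quasicomplete T → T.dim ≤ q)
    (hattain : ∃ T ∈ C, Quasicomplete T ∧ T.dim = q)
    (n : ℕ) (hn : 1 ≤ n) : NC C n ≤ (k ^ 2 * n) ^ q := by
  have hone : 1 ≤ (k ^ 2 * n) ^ q := Nat.one_le_pow _ _ (by positivity)
  have hbound : ∀ T ∈ C, T.dim ≤ n → T.N ≤ (k ^ 2 * n) ^ q := by
    intro T hT hdim
    have hcubeF : ∀ d, HasCube d T.rows → d ≤ q := by
      rintro d ⟨φ, hφ, Bs, hBs, hc⟩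
      set T' : Table B := ⟨d, T.rows.image (fun r => r ∘ φ), fun _ => 0⟩ with hT'def
      have hT' : T' ∈ C := hC T hT T' ⟨φ, hφ, rfl⟩
      have hqc : Quasicomplete T' := by
        refine ⟨Bs, hBs, fun r hr => ?_⟩
        obtain ⟨s, hs, rfl⟩ := hc r hr
        exact Finset.mem_image_of_mem _ hs
      exact hub T' hT' hqc
    rcases Nat.eq_zero_or_pos T.dim with h0 | hpos
    · have : T.rows.card ≤ 1 := by
        refine Finset.card_le_one.mpr fun a _ b _ => ?_
        funext i
        exact absurd i.isLt (by omega)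
      calc T.N ≤ 1 := this
        _ ≤ (k ^ 2 * n) ^ q := hone
    · calc T.N ≤ (k ^ 2 * T.dim) ^ q := key_lemma k hk hk2 T.dim hpos q T.rows hcubeF
        _ ≤ (k ^ 2 * n) ^ q := Nat.pow_le_pow_left (Nat.mul_le_mul_left _ hdim) _
  refine csSup_le' ?_
  rintro m ⟨T, hT, hdim, rfl⟩
  exact hbound T hT hdim
end

section
/- Let C be a nondegenerate closed class of B-decision tables and T ∈ C with cl(T) ≥ 2. Then N_C(R(T)) ≥ cl(T), where N_C(m) = max{N(T') : T' ∈ C, dim T' ≤ m} and R(T) is the minimum cardinality of a reduct for T. -/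
open scoped Classical

variable {B : Type} [Fintype B] [DecidableEq B]

/-! Restricting `T` to a minimum reduct gives a table of `C` of dimension `R(T)`. Rows of `T`
with different decisions are separated by the reduct, so their restrictions differ; hence the
restricted table has at least `cl(T)` rows. -/

theorem Finset.card_image_le_card_image_of_factorsThrough {α β γ : Type*} [DecidableEq β]
    [DecidableEq γ] {s : Finset α} {f : α → β} {g : α → γ}
    (h : ∀ a ∈ s, ∀ b ∈ s, g a = g b → f a = f b) :
    (s.image f).card ≤ (s.image g).card := by
  refine Finset.card_le_card_of_forall_subsingleton (fun y z => ∃ a ∈ s, f a = y ∧ g a = z)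
    ?_ ?_
  · intro y hy
    obtain ⟨a, ha, rfl⟩ := Finset.mem_image.mp hy
    exact ⟨g a, Finset.mem_image_of_mem g ha, a, ha, rfl, rfl⟩
  · rintro z - y₁ ⟨-, a, ha, rfl, rfl⟩ y₂ ⟨-, b, hb, rfl, hgb⟩
    exact h a ha b hb hgb.symm

theorem isTest_univ (T : Table B) : IsTest T Finset.univ := by
  intro r _ r' _ hdec
  obtain ⟨i, hi⟩ := Function.ne_iff.mp fun h : r = r' => hdec (congrArg T.dec h)
  exact ⟨i, Finset.mem_univ i, hi⟩

theorem exists_isReduct_card_eq_R (T : Table B) :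
    ∃ S : Finset (Fin T.dim), IsReduct T S ∧ S.card = R T := by
  set testCards : Set ℕ := {k | ∃ S : Finset (Fin T.dim), IsTest T S ∧ S.card = k}
  obtain ⟨S, hS, hScard⟩ : sInf testCards ∈ testCards :=
    Nat.sInf_mem ⟨_, Finset.univ, isTest_univ T, rfl⟩
  have hred : IsReduct T S := by
    refine ⟨hS, fun S' hS' hS't => ?_⟩
    have : sInf testCards ≤ S'.card := Nat.sInf_le ⟨S', hS't, rfl⟩
    have := Finset.card_lt_card hS'
    omega
  exact Nat.sInf_mem (s := {m | ∃ S, IsReduct T S ∧ S.card = m}) ⟨S.card, S, hred, rfl⟩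

-- The decisions of a restriction play no role; they are set to `0`.
noncomputable def Table.restrict (T : Table B) (S : Finset (Fin T.dim)) : Table B where
  dim := S.card
  rows := T.rows.image (· ∘ S.orderEmbOfFin rfl)
  dec := fun _ => 0

theorem subTable_restrict (T : Table B) (S : Finset (Fin T.dim)) :
    SubTable T (T.restrict S) :=
  ⟨S.orderEmbOfFin rfl, (S.orderEmbOfFin rfl).strictMono, rfl⟩

theorem IsTest.cl_le_N_restrict {T : Table B} {S : Finset (Fin T.dim)} (hS : IsTest T S) :
    T.cl ≤ (T.restrict S).N := by
  refine Finset.card_image_le_card_image_of_factorsThrough fun r hr r' hr' heq => ?_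
  by_contra hdec
  obtain ⟨i, hiS, hi⟩ := hS r hr r' hr' hdec
  obtain ⟨j, rfl⟩ : i ∈ Set.range (S.orderEmbOfFin rfl) := by
    rwa [Finset.range_orderEmbOfFin]
  exact hi (congrFun heq j)

theorem Table.N_le_card_pow_dim (T : Table B) : T.N ≤ Fintype.card B ^ T.dim := by
  simpa [Table.N] using T.rows.card_le_univ

theorem bddAbove_N_of_dim_le (C : Set (Table B)) (n : ℕ) :
    BddAbove {m | ∃ T ∈ C, T.dim ≤ n ∧ T.N = m} := by
  refine ⟨(Fintype.card B + 1) ^ n, ?_⟩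
  rintro _ ⟨T, -, hdim, rfl⟩
  calc T.N ≤ Fintype.card B ^ T.dim := T.N_le_card_pow_dim
    _ ≤ (Fintype.card B + 1) ^ T.dim := Nat.pow_le_pow_left (Nat.le_succ _) _
    _ ≤ (Fintype.card B + 1) ^ n := Nat.pow_le_pow_right (Nat.succ_pos _) hdim

theorem N_le_NC {C : Set (Table B)} {T : Table B} (hT : T ∈ C) {n : ℕ} (hdim : T.dim ≤ n) :
    T.N ≤ NC C n :=
  le_csSup (bddAbove_N_of_dim_le C n) ⟨T, hT, hdim, rfl⟩

theorem stmt_9_general (C : Set (Table B)) (hC : IsClosedClass C)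
    (T : Table B) (hT : T ∈ C) :
    T.cl ≤ NC C (R T) := by
  obtain ⟨S, ⟨hStest, -⟩, hScard⟩ := exists_isReduct_card_eq_R T
  have hrestrict : T.restrict S ∈ C := hC T hT _ (subTable_restrict T S)
  exact hStest.cl_le_N_restrict.trans (N_le_NC hrestrict hScard.le)

theorem stmt_9 (C : Set (Table B)) (hC : IsClosedClass C) (hnd : Nondegenerate C)
    (T : Table B) (hT : T ∈ C) (hcl : 2 ≤ T.cl) :
    T.cl ≤ NC C (R T) :=
  stmt_9_general C hC T hT
end
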